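/- arXiv:1804.02941 — 6 statements merged into one kernel-verified Lean document; each statement's English description precedes it below -/
import Mathlib

section
/- Let n ≥ 2, W ∈ ℝⁿ, and S ⊆ {1,…,n} with K = |S|, 0 < K < n. Writing T = ∑_{i=1}^n W_i and t = ∑_{i∈S} W_i, the objective satisfies the identity D(S) = t²/K + (T−t)²/(n−K) = (n/(K(n−K)))·(t − K·T/n)² + T²/n. In particular, for fixed K, maximizing D(S) over masks S of size K is equivalent to maximizing |∑_{i∈S} W_i − K·T/n|. -/
/-! Splitting a total `T` into `t` and `T - t`, the objective `t²/K + (T - t)²/(n - K)` is a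
quadratic in `t` whose vertex sits at the proportional share `t = K T / n`, with value `T²/n`
there. Completing the square gives the identity, and since the leading coefficient
`n / (K (n - K))` is positive, comparing objectives amounts to comparing `|t - K T / n|`. -/

open Finset

/-- `D(S)` written in terms of `t = ∑_{i∈S} W_i`, `T = ∑ W_i`, `k = |S|` and `m = n`. -/
noncomputable def splitObjective (k m T t : ℝ) : ℝ :=
  t ^ 2 / k + (T - t) ^ 2 / (m - k)

theorem splitObjective_eq_sq_add {k m : ℝ} (hk : k ≠ 0) (hmk : m - k ≠ 0) (hm : m ≠ 0)
    (T t : ℝ) :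
    splitObjective k m T t = m / (k * (m - k)) * (t - k * T / m) ^ 2 + T ^ 2 / m := by
  unfold splitObjective
  field_simp
  ring

theorem splitObjective_le_iff {k m : ℝ} (hk : 0 < k) (hkm : k < m) (T t t' : ℝ) :
    splitObjective k m T t ≤ splitObjective k m T t' ↔
      |t - k * T / m| ≤ |t' - k * T / m| := by
  have hmk : 0 < m - k := sub_pos.mpr hkm
  have hm : 0 < m := hk.trans hkm
  have hc : 0 < m / (k * (m - k)) := by positivity
  simp only [splitObjective_eq_sq_add hk.ne' hmk.ne' hm.ne', add_le_add_iff_right,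
    mul_le_mul_iff_of_pos_left hc, sq_le_sq]

theorem sum_compl_eq_sub {ι M : Type*} [Fintype ι] [DecidableEq ι] [AddCommGroup M]
    (s : Finset ι) (f : ι → M) :
    ∑ i ∈ sᶜ, f i = ∑ i, f i - ∑ i ∈ s, f i :=
  eq_sub_of_add_eq' (sum_add_sum_compl s f)

theorem dabnet_objective_identity_general (n : ℕ) (W : Fin n → ℝ)
    (S : Finset (Fin n)) (K : ℕ) (hK0 : 0 < K) (hKn : K < n)
    (T t : ℝ) (hT : T = ∑ i, W i) :
    (t ^ 2 / (K : ℝ) + (T - t) ^ 2 / ((n : ℝ) - (K : ℝ))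
      = ((n : ℝ) / ((K : ℝ) * ((n : ℝ) - (K : ℝ)))) * (t - (K : ℝ) * T / (n : ℝ)) ^ 2
        + T ^ 2 / (n : ℝ))
    ∧ ∀ S' : Finset (Fin n), S'.card = K →
        ((∑ i ∈ S, W i) ^ 2 / (K : ℝ) + (∑ i ∈ Sᶜ, W i) ^ 2 / ((n : ℝ) - (K : ℝ))
            ≤ (∑ i ∈ S', W i) ^ 2 / (K : ℝ)
              + (∑ i ∈ S'ᶜ, W i) ^ 2 / ((n : ℝ) - (K : ℝ))
          ↔ |(∑ i ∈ S, W i) - (K : ℝ) * T / (n : ℝ)|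
              ≤ |(∑ i ∈ S', W i) - (K : ℝ) * T / (n : ℝ)|) := by
  have hK : (0 : ℝ) < K := by exact_mod_cast hK0
  have hKn' : (K : ℝ) < n := by exact_mod_cast hKn
  refine ⟨splitObjective_eq_sq_add hK.ne' (sub_pos.mpr hKn').ne' (hK.trans hKn').ne' T t,
    fun S' _ => ?_⟩
  rw [sum_compl_eq_sub S, sum_compl_eq_sub S', ← hT]
  exact splitObjective_le_iff hK hKn' T _ _

/-- With `T = ∑_i W_i` and `t = ∑_{i∈S} W_i`, the objective satisfies
`D(S) = t²/K + (T−t)²/(n−K) = (n/(K(n−K)))·(t − K·T/n)² + T²/n`; consequently,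
for fixed `K`, maximizing `D` over size-`K` masks is equivalent to maximizing
`|∑_{i∈S} W_i − K·T/n|`. -/
theorem dabnet_objective_identity (n : ℕ) (hn : 2 ≤ n) (W : Fin n → ℝ)
    (S : Finset (Fin n)) (K : ℕ) (hK : K = S.card) (hK0 : 0 < K) (hKn : K < n)
    (T t : ℝ) (hT : T = ∑ i, W i) (ht : t = ∑ i ∈ S, W i) :
    (t ^ 2 / (K : ℝ) + (T - t) ^ 2 / ((n : ℝ) - (K : ℝ))
      = ((n : ℝ) / ((K : ℝ) * ((n : ℝ) - (K : ℝ)))) * (t - (K : ℝ) * T / (n : ℝ)) ^ 2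
        + T ^ 2 / (n : ℝ))
    ∧ ∀ S' : Finset (Fin n), S'.card = K →
        ((∑ i ∈ S, W i) ^ 2 / (K : ℝ) + (∑ i ∈ Sᶜ, W i) ^ 2 / ((n : ℝ) - (K : ℝ))
            ≤ (∑ i ∈ S', W i) ^ 2 / (K : ℝ)
              + (∑ i ∈ S'ᶜ, W i) ^ 2 / ((n : ℝ) - (K : ℝ))
          ↔ |(∑ i ∈ S, W i) - (K : ℝ) * T / (n : ℝ)|
              ≤ |(∑ i ∈ S', W i) - (K : ℝ) * T / (n : ℝ)|) :=
  dabnet_objective_identity_general n W S K hK0 hKn T t hT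
end

section
/- Let n ≥ 2, W ∈ ℝⁿ, and fix K with 0 < K < n. Let S_top be a set of indices of K largest entries of W and S_bot a set of indices of K smallest entries of W (with respect to a fixed nonincreasing rearrangement). Then for every subset S ⊆ {1,…,n} with |S| = K, D(S) ≤ max( D(S_top), D(S_bot) ). That is, for a given K, the objective D is maximized at a mask selecting either the K largest weights or the K smallest weights of W. -/
/-! With `s = ∑_{i∈S} W_i` and `T = ∑_i W_i`, a mask of size `K` has
`D(S) = s²/K + (T - s)²/(n - K)`, a convex function of `s`. Exchanging elements shows that
`s` lies between the sums over the `K` smallest and the `K` largest weights, and a convex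
function on an interval is maximized at an endpoint. -/

open Finset

namespace Finset

variable {ι β : Type*} [AddCommMonoid β] [LinearOrder β] {f : ι → β} {s t : Finset ι}

theorem sum_le_sum_of_card_eq_of_forall_le [IsOrderedAddMonoid β] (hcard : #s = #t)
    (h : ∀ i ∈ s, ∀ j ∈ t, f i ≤ f j) : ∑ i ∈ s, f i ≤ ∑ j ∈ t, f j := by
  obtain rfl | ht := t.eq_empty_or_nonempty
  · rw [card_empty, card_eq_zero] at hcard
    simp [hcard]
  obtain ⟨j₀, hj₀, hmin⟩ := t.exists_min_image f ht
  calc ∑ i ∈ s, f i ≤ #s • f j₀ := s.sum_le_card_nsmul f _ fun i hi ↦ h i hi j₀ hj₀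
    _ = #t • f j₀ := by rw [hcard]
    _ ≤ ∑ j ∈ t, f j := t.card_nsmul_le_sum f _ hmin

variable [IsOrderedCancelAddMonoid β] [DecidableEq ι]

theorem sum_le_sum_of_card_eq_of_forall_notMem_le (hcard : #s = #t)
    (ht : ∀ i ∈ t, ∀ j ∉ t, f j ≤ f i) : ∑ i ∈ s, f i ≤ ∑ i ∈ t, f i :=
  sum_sdiff_le_sum_sdiff.1 <| sum_le_sum_of_card_eq_of_forall_le (card_sdiff_comm hcard)
    fun i hi j hj ↦ ht j (mem_sdiff.1 hj).1 i (mem_sdiff.1 hi).2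

theorem sum_le_sum_of_card_eq_of_forall_le_notMem (hcard : #s = #t)
    (ht : ∀ i ∈ t, ∀ j ∉ t, f i ≤ f j) : ∑ i ∈ t, f i ≤ ∑ i ∈ s, f i :=
  sum_le_sum_of_card_eq_of_forall_notMem_le (β := βᵒᵈ) hcard ht

end Finset

theorem convexOn_sq_div_add_sub_sq_div {k m : ℝ} (hk : 0 ≤ k) (hm : 0 ≤ m) (T : ℝ) :
    ConvexOn ℝ Set.univ fun x : ℝ ↦ x ^ 2 / k + (T - x) ^ 2 / m := by
  have hsq : ConvexOn ℝ Set.univ fun x : ℝ ↦ x ^ 2 := even_two.convexOn_pow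
  have hreflect : ConvexOn ℝ Set.univ fun x : ℝ ↦ (T - x) ^ 2 :=
    hsq.comp_affineMap (AffineMap.const ℝ ℝ T - AffineMap.id ℝ ℝ)
  simp only [div_eq_inv_mul]
  exact (hsq.smul (inv_nonneg.2 hk)).add (hreflect.smul (inv_nonneg.2 hm))

theorem dabnet_objective_max_at_extremes_general (n : ℕ) (W : Fin n → ℝ)
    (K : ℕ) (hKn : K < n)
    (Stop Sbot : Finset (Fin n))
    (htopcard : Stop.card = K) (hbotcard : Sbot.card = K)
    (htop : ∀ i ∈ Stop, ∀ j ∉ Stop, W j ≤ W i)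
    (hbot : ∀ i ∈ Sbot, ∀ j ∉ Sbot, W i ≤ W j)
    (D : Finset (Fin n) → ℝ)
    (hD : ∀ S : Finset (Fin n),
      D S = (∑ i ∈ S, W i) ^ 2 / (S.card : ℝ)
            + (∑ i ∈ Sᶜ, W i) ^ 2 / ((n : ℝ) - (S.card : ℝ))) :
    ∀ S : Finset (Fin n), S.card = K → D S ≤ max (D Stop) (D Sbot) := by
  intro S hS
  set g : ℝ → ℝ := fun x ↦ x ^ 2 / K + ((∑ i, W i) - x) ^ 2 / ((n : ℝ) - K)
  have hDg : ∀ A : Finset (Fin n), A.card = K → D A = g (∑ i ∈ A, W i) := by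
    intro A hA
    simp only [g, hD, hA, ← sum_add_sum_compl A W, add_sub_cancel_left]
  have hg : ConvexOn ℝ Set.univ g :=
    convexOn_sq_div_add_sub_sq_div (Nat.cast_nonneg K)
      (sub_nonneg.2 (Nat.cast_le.2 hKn.le)) _
  have hmem : ∑ i ∈ S, W i ∈ Set.Icc (∑ i ∈ Sbot, W i) (∑ i ∈ Stop, W i) :=
    ⟨sum_le_sum_of_card_eq_of_forall_le_notMem (hS.trans hbotcard.symm) hbot,
      sum_le_sum_of_card_eq_of_forall_notMem_le (hS.trans htopcard.symm) htop⟩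
  rw [hDg S hS, hDg Stop htopcard, hDg Sbot hbotcard, max_comm]
  exact hg.le_max_of_mem_Icc trivial trivial hmem

/-- For a fixed `K` with `0 < K < n`, the objective
`D(S) = (∑_{i∈S} W_i)²/K + (∑_{i∉S} W_i)²/(n−K)` over size-`K` masks is
maximized at a mask selecting either the `K` largest weights (`Stop`) or the
`K` smallest weights (`Sbot`) of `W`. -/
theorem dabnet_objective_max_at_extremes (n : ℕ) (hn : 2 ≤ n) (W : Fin n → ℝ)
    (K : ℕ) (hK0 : 0 < K) (hKn : K < n)
    (Stop Sbot : Finset (Fin n))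
    (htopcard : Stop.card = K) (hbotcard : Sbot.card = K)
    (htop : ∀ i ∈ Stop, ∀ j ∉ Stop, W j ≤ W i)
    (hbot : ∀ i ∈ Sbot, ∀ j ∉ Sbot, W i ≤ W j)
    (D : Finset (Fin n) → ℝ)
    (hD : ∀ S : Finset (Fin n),
      D S = (∑ i ∈ S, W i) ^ 2 / (S.card : ℝ)
            + (∑ i ∈ Sᶜ, W i) ^ 2 / ((n : ℝ) - (S.card : ℝ))) :
    ∀ S : Finset (Fin n), S.card = K → D S ≤ max (D Stop) (D Sbot) :=
  dabnet_objective_max_at_extremes_general n W K hKn Stop Sbot htopcard hbotcard htop hbot D hD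
end

section
/- Let n ≥ 2, W ∈ ℝⁿ, and let S, S′ ⊆ {1,…,n} be two proper masks (0 < |S| < n and 0 < |S′| < n). Denote by E(S) = min_{α,β∈ℝ} ‖W − α·e_S − β·(1−e_S)‖² the minimal binarization error with mask S, where e_S is the indicator vector of S. Then E(S) ≤ E(S′) if and only if D(S) ≥ D(S′). Hence minimizing the binarization error over masks is equivalent to maximizing the objective D. -/
/-!
Splitting the error along `S` and its complement, each half is `∑ (W i - c) ^ 2` over a block
of size `k`, which equals `∑ W i ^ 2 - (∑ W i) ^ 2 / k + k (c - mean) ^ 2`. Hence the optimal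
levels are the block means and `E(S) = ‖W‖² - D(S)`.
-/

open Finset

variable {ι : Type*}

theorem Finset.sum_sub_const_sq (s : Finset ι) (f : ι → ℝ) (a : ℝ) (hs : s.Nonempty) :
    ∑ i ∈ s, (f i - a) ^ 2 =
      ∑ i ∈ s, f i ^ 2 - (∑ i ∈ s, f i) ^ 2 / #s + #s * (a - (∑ i ∈ s, f i) / #s) ^ 2 := by
  have hs : (#s : ℝ) ≠ 0 := by exact_mod_cast hs.card_pos.ne'
  simp only [sub_sq, sum_add_distrib, sum_sub_distrib, ← sum_mul, ← mul_sum, sum_const,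
    nsmul_eq_mul]
  field_simp
  ring

theorem Finset.sum_sub_ite_sq [Fintype ι] [DecidableEq ι] (f : ι → ℝ) (T : Finset ι) (α β : ℝ) :
    ∑ i, (f i - if i ∈ T then α else β) ^ 2 =
      ∑ i ∈ T, (f i - α) ^ 2 + ∑ i ∈ Tᶜ, (f i - β) ^ 2 := by
  rw [← sum_add_sum_compl T]
  congr 1 <;> refine sum_congr rfl fun i hi => ?_ <;> simp_all

theorem isLeast_sum_sub_ite_sq [Fintype ι] [DecidableEq ι] (f : ι → ℝ) (T : Finset ι)
    (hT : T.Nonempty) (hTc : Tᶜ.Nonempty) :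
    IsLeast {x : ℝ | ∃ α β : ℝ, x = ∑ i, (f i - if i ∈ T then α else β) ^ 2}
      (∑ i, f i ^ 2 - ((∑ i ∈ T, f i) ^ 2 / #T + (∑ i ∈ Tᶜ, f i) ^ 2 / #Tᶜ)) := by
  have error_eq (α β : ℝ) : ∑ i, (f i - if i ∈ T then α else β) ^ 2 =
      ∑ i, f i ^ 2 - ((∑ i ∈ T, f i) ^ 2 / #T + (∑ i ∈ Tᶜ, f i) ^ 2 / #Tᶜ)
        + #T * (α - (∑ i ∈ T, f i) / #T) ^ 2 + #Tᶜ * (β - (∑ i ∈ Tᶜ, f i) / #Tᶜ) ^ 2 := by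
    rw [sum_sub_ite_sq, sum_sub_const_sq _ _ _ hT, sum_sub_const_sq _ _ _ hTc,
      ← sum_add_sum_compl T (fun i => f i ^ 2)]
    ring
  refine ⟨⟨(∑ i ∈ T, f i) / #T, (∑ i ∈ Tᶜ, f i) / #Tᶜ, by simp [error_eq]⟩, ?_⟩
  rintro _ ⟨α, β, rfl⟩
  rw [error_eq]
  have := mul_nonneg (Nat.cast_nonneg (α := ℝ) #T) (sq_nonneg (α - (∑ i ∈ T, f i) / #T))
  have := mul_nonneg (Nat.cast_nonneg (α := ℝ) #Tᶜ) (sq_nonneg (β - (∑ i ∈ Tᶜ, f i) / #Tᶜ))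
  linarith

theorem dabnet_error_iff_objective_general (n : ℕ) (W : Fin n → ℝ)
    (S S' : Finset (Fin n))
    (hS0 : 0 < S.card) (hSn : S.card < n)
    (hS'0 : 0 < S'.card) (hS'n : S'.card < n)
    (E : Finset (Fin n) → ℝ)
    (hE : ∀ T : Finset (Fin n),
      E T = sInf {x : ℝ | ∃ α β : ℝ,
        x = ∑ i, (W i - (if i ∈ T then α else β)) ^ 2})
    (D : Finset (Fin n) → ℝ)
    (hD : ∀ T : Finset (Fin n),
      D T = (∑ i ∈ T, W i) ^ 2 / (T.card : ℝ)
            + (∑ i ∈ Tᶜ, W i) ^ 2 / ((n : ℝ) - (T.card : ℝ))) :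
    E S ≤ E S' ↔ D S' ≤ D S := by
  have error_eq (T : Finset (Fin n)) (h0 : 0 < #T) (h1 : #T < n) :
      E T = ∑ i, W i ^ 2 - D T := by
    have card_compl_eq : (#Tᶜ : ℝ) = n - #T := by
      rw [card_compl, Fintype.card_fin, Nat.cast_sub h1.le]
    have hTc : Tᶜ.Nonempty := card_pos.mp (by rw [card_compl, Fintype.card_fin]; omega)
    rw [hE, hD, ← card_compl_eq]
    exact (isLeast_sum_sub_ite_sq W T (card_pos.mp h0) hTc).csInf_eq
  rw [error_eq S hS0 hSn, error_eq S' hS'0 hS'n, sub_le_sub_iff_left]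

/-- For two proper masks `S`, `S′`, the minimal binarization errors
`E(S) = min_{α,β} ‖W − α·e_S − β·(1−e_S)‖²` satisfy `E(S) ≤ E(S′)` if and only
if `D(S) ≥ D(S′)`: minimizing the error over masks is equivalent to maximizing
the objective `D`. -/
theorem dabnet_error_iff_objective (n : ℕ) (hn : 2 ≤ n) (W : Fin n → ℝ)
    (S S' : Finset (Fin n))
    (hS0 : 0 < S.card) (hSn : S.card < n)
    (hS'0 : 0 < S'.card) (hS'n : S'.card < n)
    (E : Finset (Fin n) → ℝ)
    (hE : ∀ T : Finset (Fin n),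
      E T = sInf {x : ℝ | ∃ α β : ℝ,
        x = ∑ i, (W i - (if i ∈ T then α else β)) ^ 2})
    (D : Finset (Fin n) → ℝ)
    (hD : ∀ T : Finset (Fin n),
      D T = (∑ i ∈ T, W i) ^ 2 / (T.card : ℝ)
            + (∑ i ∈ Tᶜ, W i) ^ 2 / ((n : ℝ) - (T.card : ℝ))) :
    E S ≤ E S' ↔ D S' ≤ D S :=
  dabnet_error_iff_objective_general n W S S' hS0 hSn hS'0 hS'n E hE D hD
end

section
/- Let n ≥ 1 and W ∈ ℝⁿ. For every α ∈ ℝ and every sign vector s ∈ {−1, +1}ⁿ, the XNOR-style symmetric binarization error satisfies ‖W − α·s‖² ≥ ‖W‖² − (∑_{i=1}^n |W_i|)²/n, with equality when s_i = sign(W_i) (s_i arbitrary in {−1,+1} when W_i = 0) and α = (∑_i |W_i|)/n. -/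
/-!
Expanding the square with `s i ^ 2 = 1` gives `‖W‖² - 2 α ⟪W, s⟫ + α² n`, a quadratic in `α` whose
minimum is `‖W‖² - ⟪W, s⟫² / n`. Since `|⟪W, s⟫| ≤ ∑ |W i|`, with equality for `s = sign W`,
the error is at least `‖W‖² - (∑ |W i|)² / n`, attained at `s = sign W`, `α = (∑ |W i|) / n`.
-/

open Finset

lemma Real.mul_sign_eq_abs (x : ℝ) : x * Real.sign x = |x| := by
  rcases lt_trichotomy x 0 with hx | rfl | hx
  · rw [Real.sign_of_neg hx, abs_of_neg hx, mul_neg_one]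
  · simp
  · rw [Real.sign_of_pos hx, abs_of_pos hx, mul_one]

lemma two_mul_mul_sub_sq_mul_le_sq_div {N : ℝ} (hN : 0 < N) (x c : ℝ) :
    2 * x * c - x ^ 2 * N ≤ c ^ 2 / N := by
  rw [le_div_iff₀ hN]
  nlinarith [sq_nonneg (x * N - c)]

section Binarization

variable {ι : Type*} [Fintype ι] (W s : ι → ℝ)

lemma sum_sub_mul_sq_eq_of_abs_eq_one (hs : ∀ i, |s i| = 1) (α : ℝ) :
    ∑ i, (W i - α * s i) ^ 2
      = ∑ i, W i ^ 2 - 2 * α * ∑ i, W i * s i + α ^ 2 * Fintype.card ι := by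
  have hterm : ∀ i, (W i - α * s i) ^ 2 = W i ^ 2 - 2 * α * (W i * s i) + α ^ 2 := by
    intro i
    have hsq : s i ^ 2 = 1 := by rw [← sq_abs, hs i, one_pow]
    linear_combination α ^ 2 * hsq
  simp only [hterm, sum_add_distrib, sum_sub_distrib, ← mul_sum, sum_const, card_univ,
    nsmul_eq_mul, mul_comm (α ^ 2)]

lemma abs_sum_mul_le_sum_abs (hs : ∀ i, |s i| ≤ 1) : |∑ i, W i * s i| ≤ ∑ i, |W i| :=
  (abs_sum_le_sum_abs _ _).trans <| sum_le_sum fun i _ => by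
    rw [abs_mul]
    exact mul_le_of_le_one_right (abs_nonneg _) (hs i)

lemma sum_mul_eq_sum_abs_of_eq_sign (hs : ∀ i, W i ≠ 0 → s i = Real.sign (W i)) :
    ∑ i, W i * s i = ∑ i, |W i| := by
  refine sum_congr rfl fun i _ => ?_
  by_cases hW : W i = 0
  · simp [hW]
  · rw [hs i hW, Real.mul_sign_eq_abs]

theorem sum_sq_sub_sq_div_card_le_sum_sub_mul_sq (hs : ∀ i, |s i| = 1) (α : ℝ) :
    ∑ i, W i ^ 2 - (∑ i, |W i|) ^ 2 / Fintype.card ι ≤ ∑ i, (W i - α * s i) ^ 2 := by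
  rcases (Fintype.card ι).eq_zero_or_pos with hι | hι
  · simp [Fintype.card_eq_zero_iff.1 hι]
  rw [sum_sub_mul_sq_eq_of_abs_eq_one W s hs]
  have hcorr : |∑ i, W i * s i| ≤ ∑ i, |W i| := abs_sum_mul_le_sum_abs W s fun i => (hs i).le
  have hsq : (∑ i, W i * s i) ^ 2 ≤ (∑ i, |W i|) ^ 2 :=
    sq_le_sq' (neg_le_of_abs_le hcorr) (le_of_abs_le hcorr)
  have hquad := two_mul_mul_sub_sq_mul_le_sq_div (Nat.cast_pos.2 hι) α (∑ i, W i * s i)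
  have hdiv := div_le_div_of_nonneg_right hsq (Nat.cast_nonneg (α := ℝ) (Fintype.card ι))
  linarith

theorem sum_sub_mul_sign_sq_eq (hs : ∀ i, |s i| = 1)
    (hsign : ∀ i, W i ≠ 0 → s i = Real.sign (W i)) :
    ∑ i, (W i - (∑ j, |W j|) / Fintype.card ι * s i) ^ 2
      = ∑ i, W i ^ 2 - (∑ i, |W i|) ^ 2 / Fintype.card ι := by
  rw [sum_sub_mul_sq_eq_of_abs_eq_one W s hs, sum_mul_eq_sum_abs_of_eq_sign W s hsign]
  rcases eq_or_ne (Fintype.card ι : ℝ) 0 with hι | hι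
  · simp [hι]
  · field_simp
    ring

end Binarization

theorem xnor_binarization_error_bound_general (n : ℕ) (W : Fin n → ℝ) :
    (∀ (α : ℝ) (s : Fin n → ℝ), (∀ i, s i = 1 ∨ s i = -1) →
      ∑ i, (W i) ^ 2 - (∑ i, |W i|) ^ 2 / (n : ℝ)
        ≤ ∑ i, (W i - α * s i) ^ 2)
    ∧ ∀ s : Fin n → ℝ, (∀ i, s i = 1 ∨ s i = -1) →
        (∀ i, W i ≠ 0 → s i = Real.sign (W i)) →
        ∑ i, (W i - ((∑ j, |W j|) / (n : ℝ)) * s i) ^ 2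
          = ∑ i, (W i) ^ 2 - (∑ i, |W i|) ^ 2 / (n : ℝ) := by
  have habs (s : Fin n → ℝ) (hs : ∀ i, s i = 1 ∨ s i = -1) (i : Fin n) : |s i| = 1 :=
    (abs_eq zero_le_one).2 (hs i)
  refine ⟨fun α s hs => ?_, fun s hs hsign => ?_⟩
  · simpa using sum_sq_sub_sq_div_card_le_sum_sub_mul_sq W s (habs s hs) α
  · simpa using sum_sub_mul_sign_sq_eq W s (habs s hs) hsign

/-- For every `α ∈ ℝ` and sign vector `s ∈ {−1,+1}ⁿ`, the XNOR-style
symmetric binarization error satisfies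
`‖W − α·s‖² ≥ ‖W‖² − (∑_i |W_i|)²/n`, with equality when `s_i = sign(W_i)`
(arbitrary in `{−1,+1}` when `W_i = 0`) and `α = (∑_i |W_i|)/n`. -/
theorem xnor_binarization_error_bound (n : ℕ) (hn : 1 ≤ n) (W : Fin n → ℝ) :
    (∀ (α : ℝ) (s : Fin n → ℝ), (∀ i, s i = 1 ∨ s i = -1) →
      ∑ i, (W i) ^ 2 - (∑ i, |W i|) ^ 2 / (n : ℝ)
        ≤ ∑ i, (W i - α * s i) ^ 2)
    ∧ ∀ s : Fin n → ℝ, (∀ i, s i = 1 ∨ s i = -1) →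
        (∀ i, W i ≠ 0 → s i = Real.sign (W i)) →
        ∑ i, (W i - ((∑ j, |W j|) / (n : ℝ)) * s i) ^ 2
          = ∑ i, (W i) ^ 2 - (∑ i, |W i|) ^ 2 / (n : ℝ) :=
  xnor_binarization_error_bound_general n W
end

section
/- Let n ≥ 2 and W ∈ ℝⁿ have at least one strictly positive and at least one strictly negative entry. Let S⁺ = { i : W_i > 0 }, which is then a proper mask (0 < |S⁺| < n). Then D(S⁺) ≥ (∑_{i=1}^n |W_i|)²/n. Consequently the minimal distribution-aware binarization error min_{α,β} ‖W − α·e_{S⁺} − β·(1−e_{S⁺})‖² is at most the minimal XNOR-style error min_{α∈ℝ, s∈{−1,+1}ⁿ} ‖W − α·s‖²; i.e., the two-parameter (α,β) binarization approximates W at least as well as the symmetric (α,−α) binarization. -/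
/-!
Split `∑ |Wᵢ| = A - B` with `A = ∑_{S⁺} Wᵢ ≥ 0` and `B = ∑_{S⁺ᶜ} Wᵢ ≤ 0`. Sedrakyan's inequality for
the two terms `A` and `-B` with weights `|S⁺|` and `n - |S⁺|` gives `D(S⁺) ≥ (∑ |Wᵢ|)² / n`.
With the class means as `α, β` the masked error is `‖W‖² - D(S⁺)`, while for any signs `s` and scale
`α` the XNOR error is `∑ (sᵢWᵢ - α)² ≥ ‖W‖² - (∑ sᵢWᵢ)² / n ≥ ‖W‖² - (∑ |Wᵢ|)² / n`.
-/

open Finset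

lemma add_sq_div_add_le {a b k m : ℝ} (hk : 0 < k) (hm : 0 < m) :
    (a + b) ^ 2 / (k + m) ≤ a ^ 2 / k + b ^ 2 / m := by
  have h := sq_sum_div_le_sum_sq_div univ ![a, b] (g := ![k, m])
    (by simp [Fin.forall_fin_two, hk, hm])
  simpa only [Fin.sum_univ_two, Matrix.cons_val_zero, Matrix.cons_val_one] using h

section Finset

variable {ι : Type*} (s : Finset ι) (x : ι → ℝ)

lemma sum_sq_sub_const (c : ℝ) :
    ∑ i ∈ s, (x i - c) ^ 2 = ∑ i ∈ s, x i ^ 2 - 2 * c * ∑ i ∈ s, x i + #s * c ^ 2 := by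
  have h : ∀ i, (x i - c) ^ 2 = x i ^ 2 - 2 * c * x i + c ^ 2 := fun i ↦ by ring
  simp only [h, sum_add_distrib, sum_sub_distrib, ← mul_sum, sum_const, nsmul_eq_mul]

lemma sum_sq_sub_mean :
    ∑ i ∈ s, (x i - (∑ j ∈ s, x j) / #s) ^ 2 = ∑ i ∈ s, x i ^ 2 - (∑ i ∈ s, x i) ^ 2 / #s := by
  rcases s.eq_empty_or_nonempty with rfl | hs
  · simp
  have hk : (#s : ℝ) ≠ 0 := by exact_mod_cast hs.card_pos.ne'
  rw [sum_sq_sub_const]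
  field_simp
  ring

lemma sum_sq_sub_sq_sum_div_card_le (c : ℝ) :
    ∑ i ∈ s, x i ^ 2 - (∑ i ∈ s, x i) ^ 2 / #s ≤ ∑ i ∈ s, (x i - c) ^ 2 := by
  rw [sum_sq_sub_const]
  rcases s.eq_empty_or_nonempty with rfl | hs
  · simp
  have hk : (0 : ℝ) < #s := by exact_mod_cast hs.card_pos
  have : 2 * c * ∑ i ∈ s, x i - #s * c ^ 2 ≤ (∑ i ∈ s, x i) ^ 2 / #s := by
    rw [le_div_iff₀ hk]
    nlinarith [sq_nonneg (∑ i ∈ s, x i - #s * c)]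
  linarith

end Finset

section Fintype

variable {ι : Type*} [Fintype ι] (W : ι → ℝ)

lemma sum_sq_sub_sq_sum_abs_div_card_le {s : ι → ℝ} (hs : ∀ i, s i = 1 ∨ s i = -1) (α : ℝ) :
    ∑ i, W i ^ 2 - (∑ i, |W i|) ^ 2 / Fintype.card ι ≤ ∑ i, (W i - α * s i) ^ 2 := by
  have hsq : ∀ i, s i ^ 2 = 1 := fun i ↦ by rcases hs i with h | h <;> simp [h]
  have hsum : |∑ i, s i * W i| ≤ ∑ i, |W i| :=
    (abs_sum_le_sum_abs _ _).trans_eq <| sum_congr rfl fun i _ ↦ by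
      rcases hs i with h | h <;> simp [h]
  have hsq_le : (∑ i, s i * W i) ^ 2 ≤ (∑ i, |W i|) ^ 2 :=
    sq_le_sq' (abs_le.1 hsum).1 (abs_le.1 hsum).2
  calc ∑ i, W i ^ 2 - (∑ i, |W i|) ^ 2 / Fintype.card ι
      ≤ ∑ i, (s i * W i) ^ 2 - (∑ i, s i * W i) ^ 2 / #(univ : Finset ι) := by
        simp only [mul_pow, hsq, one_mul, card_univ]
        gcongr
    _ ≤ ∑ i, (s i * W i - α) ^ 2 := sum_sq_sub_sq_sum_div_card_le _ _ α
    _ = ∑ i, (W i - α * s i) ^ 2 := sum_congr rfl fun i _ ↦ by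
        linear_combination (W i ^ 2 - α ^ 2) * hsq i

variable [DecidableEq ι]

lemma sum_sq_sub_ite_mean (S : Finset ι) :
    ∑ i, (W i - if i ∈ S then (∑ j ∈ S, W j) / #S else (∑ j ∈ Sᶜ, W j) / #Sᶜ) ^ 2
      = ∑ i, W i ^ 2 - ((∑ i ∈ S, W i) ^ 2 / #S + (∑ i ∈ Sᶜ, W i) ^ 2 / #Sᶜ) := by
  set a := (∑ j ∈ S, W j) / #S
  set b := (∑ j ∈ Sᶜ, W j) / #Sᶜ
  have hS : ∑ i ∈ S, (W i - if i ∈ S then a else b) ^ 2 = ∑ i ∈ S, (W i - a) ^ 2 :=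
    sum_congr rfl fun i hi ↦ by rw [if_pos hi]
  have hSc : ∑ i ∈ Sᶜ, (W i - if i ∈ S then a else b) ^ 2 = ∑ i ∈ Sᶜ, (W i - b) ^ 2 :=
    sum_congr rfl fun i hi ↦ by rw [if_neg (mem_compl.1 hi)]
  rw [← sum_add_sum_compl S, hS, hSc, sum_sq_sub_mean, sum_sq_sub_mean,
    ← sum_add_sum_compl S fun i ↦ W i ^ 2]
  ring

lemma sum_abs_eq_sum_pos_sub_sum_compl :
    ∑ i, |W i| = ∑ i ∈ univ.filter (0 < W ·), W i - ∑ i ∈ (univ.filter (0 < W ·))ᶜ, W i := by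
  rw [← sum_add_sum_compl (univ.filter (0 < W ·)), sub_eq_add_neg, ← sum_neg_distrib]
  congr 1 <;> refine sum_congr rfl fun i hi ↦ ?_
  · exact abs_of_pos (mem_filter.1 hi).2
  · exact abs_of_nonpos (not_lt.1 fun h ↦ mem_compl.1 hi (mem_filter.2 ⟨mem_univ i, h⟩))

end Fintype

theorem dabnet_beats_xnor_general (n : ℕ) (W : Fin n → ℝ)
    (hpos : ∃ i, 0 < W i) (hneg : ∃ i, W i < 0)
    (Splus : Finset (Fin n))
    (hSplus : Splus = Finset.univ.filter (fun i => 0 < W i)) :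
    (0 < Splus.card ∧ Splus.card < n)
    ∧ (∑ i, |W i|) ^ 2 / (n : ℝ)
        ≤ (∑ i ∈ Splus, W i) ^ 2 / (Splus.card : ℝ)
          + (∑ i ∈ Splusᶜ, W i) ^ 2 / ((n : ℝ) - (Splus.card : ℝ))
    ∧ sInf {x : ℝ | ∃ α β : ℝ,
          x = ∑ i, (W i - (if i ∈ Splus then α else β)) ^ 2}
        ≤ sInf {x : ℝ | ∃ (α : ℝ) (s : Fin n → ℝ),
            (∀ i, s i = 1 ∨ s i = -1) ∧ x = ∑ i, (W i - α * s i) ^ 2} := by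
  obtain ⟨ip, hip⟩ := hpos
  obtain ⟨iq, hiq⟩ := hneg
  have hipS : ip ∈ Splus := by simp [hSplus, hip]
  have hiqS : iq ∉ Splus := by simp [hSplus, hiq.le]
  have hS_lt : #Splus < n := by simpa using card_lt_univ_of_notMem hiqS
  have hn : (n : ℝ) = #Splus + #Splusᶜ := by
    rw [← Nat.cast_add, card_add_card_compl, Fintype.card_fin]
  have hD : (∑ i, |W i|) ^ 2 / n
      ≤ (∑ i ∈ Splus, W i) ^ 2 / #Splus + (∑ i ∈ Splusᶜ, W i) ^ 2 / #Splusᶜ := by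
    rw [sum_abs_eq_sum_pos_sub_sum_compl, ← hSplus, sub_eq_add_neg,
      ← neg_sq (∑ i ∈ Splusᶜ, W i), hn]
    exact add_sq_div_add_le (mod_cast card_pos.2 ⟨ip, hipS⟩)
      (mod_cast card_pos.2 ⟨iq, mem_compl.2 hiqS⟩)
  have hcard : (#Splusᶜ : ℝ) = n - #Splus := by rw [hn]; ring
  refine ⟨⟨card_pos.2 ⟨ip, hipS⟩, hS_lt⟩, hcard ▸ hD, ?_⟩
  have hmask : sInf {x : ℝ | ∃ α β : ℝ, x = ∑ i, (W i - (if i ∈ Splus then α else β)) ^ 2}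
      ≤ ∑ i, W i ^ 2
        - ((∑ i ∈ Splus, W i) ^ 2 / #Splus + (∑ i ∈ Splusᶜ, W i) ^ 2 / #Splusᶜ) :=
    csInf_le ⟨0, by rintro _ ⟨α, β, rfl⟩; positivity⟩ ⟨_, _, (sum_sq_sub_ite_mean W Splus).symm⟩
  refine le_csInf ⟨_, 1, fun _ ↦ 1, fun _ ↦ Or.inl rfl, rfl⟩ ?_
  rintro _ ⟨α, s, hs, rfl⟩
  have hxnor := sum_sq_sub_sq_sum_abs_div_card_le W hs α
  rw [Fintype.card_fin] at hxnor
  linarith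

/-- If `W` has at least one strictly positive and one strictly
negative entry, then `S⁺ = {i : W_i > 0}` is a proper mask,
`D(S⁺) ≥ (∑_i |W_i|)²/n`, and consequently the minimal distribution-aware
binarization error with mask `S⁺` is at most the minimal XNOR-style symmetric
binarization error. -/
theorem dabnet_beats_xnor (n : ℕ) (hn : 2 ≤ n) (W : Fin n → ℝ)
    (hpos : ∃ i, 0 < W i) (hneg : ∃ i, W i < 0)
    (Splus : Finset (Fin n))
    (hSplus : Splus = Finset.univ.filter (fun i => 0 < W i)) :
    (0 < Splus.card ∧ Splus.card < n)
    ∧ (∑ i, |W i|) ^ 2 / (n : ℝ)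
        ≤ (∑ i ∈ Splus, W i) ^ 2 / (Splus.card : ℝ)
          + (∑ i ∈ Splusᶜ, W i) ^ 2 / ((n : ℝ) - (Splus.card : ℝ))
    ∧ sInf {x : ℝ | ∃ α β : ℝ,
          x = ∑ i, (W i - (if i ∈ Splus then α else β)) ^ 2}
        ≤ sInf {x : ℝ | ∃ (α : ℝ) (s : Fin n → ℝ),
            (∀ i, s i = 1 ∨ s i = -1) ∧ x = ∑ i, (W i - α * s i) ^ 2} :=
  dabnet_beats_xnor_general n W hpos hneg Splus hSplus
end

section
/- Let n ≥ 1, let σ : ℝ → ℝ be infinitely differentiable, and define f : ℝⁿ → ℝ by f(x) = ∑_{s ∈ {−1,+1}ⁿ} ( ∏_{i=1}^n s_i ) · σ( ∑_{i=1}^n s_i x_i ). Then the multilinear mixed partial derivative satisfies ∂ⁿ f / ∂x₁∂x₂⋯∂xₙ (0) = 2ⁿ · σ^{(n)}(0), where σ^{(n)}(0) is the n-th derivative of σ at 0. -/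
/-- For the single-hidden-layer binary network
`f(x) = ∑_{s∈{−1,+1}ⁿ} (∏_i s_i) σ(∑_i s_i x_i)` with `σ` infinitely
differentiable, the multilinear mixed partial derivative satisfies
`∂ⁿ f/∂x₁∂x₂⋯∂xₙ (0) = 2ⁿ · σ⁽ⁿ⁾(0)`. -/
theorem binary_network_multilinear_partial (n : ℕ) (hn : 1 ≤ n)
    (σ : ℝ → ℝ) (hσ : ContDiff ℝ (⊤ : ℕ∞) σ)
    (f : (Fin n → ℝ) → ℝ)
    (hf : f = fun x =>
      ∑ s ∈ Fintype.piFinset (fun _ : Fin n => ({-1, 1} : Finset ℝ)),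
        (∏ i, s i) * σ (∑ i, s i * x i)) :
    iteratedFDeriv ℝ n f 0 (fun k : Fin n => Pi.single k (1 : ℝ))
      = 2 ^ n * iteratedDeriv n σ 0 := by
  classical
  set S := Fintype.piFinset (fun _ : Fin n => ({-1, 1} : Finset ℝ)) with hS
  -- The continuous linear map x ↦ ∑ i, s i * x i
  set L : (Fin n → ℝ) → ((Fin n → ℝ) →L[ℝ] ℝ) :=
    fun s => ∑ i, s i • ContinuousLinearMap.proj i with hL
  have hLapp : ∀ s x, L s x = ∑ i, s i * x i := by
    intro s x
    simp [hL, ContinuousLinearMap.sum_apply]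
  have hterm : ∀ s : Fin n → ℝ,
      (fun x => (∏ i, s i) * σ (∑ i, s i * x i))
        = (∏ i, s i) • (σ ∘ L s) := by
    intro s
    funext x
    simp [hLapp, Function.comp, smul_eq_mul]
  have hcd : ∀ s : Fin n → ℝ, ContDiff ℝ (n : ℕ∞) (σ ∘ L s) := by
    intro s
    exact (hσ.of_le (by exact_mod_cast le_top)).comp (L s).contDiff
  have hcd2 : ∀ s : Fin n → ℝ, ContDiff ℝ (n : ℕ∞) ((∏ i, s i) • (σ ∘ L s)) := by
    intro s
    exact ContDiff.const_smul ((∏ i, s i) : ℝ) (hcd s)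
  have hf' : f = fun x => ∑ s ∈ S, ((∏ i, s i) • (σ ∘ L s)) x := by
    rw [hf]
    funext x
    exact Finset.sum_congr rfl fun s _ => congrFun (hterm s) x
  have hsum := iteratedFDeriv_sum (𝕜 := ℝ) (f := fun s => (∏ i, s i) • (σ ∘ L s))
    (u := S) (i := n) (fun s _ => hcd2 s)
  rw [hf', congrFun hsum 0, Finset.sum_apply, ContinuousMultilinearMap.sum_apply]
  have hterm2 : ∀ s ∈ S,
      iteratedFDeriv ℝ n ((∏ i, s i) • (σ ∘ L s)) 0 (fun k => Pi.single k (1 : ℝ))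
        = iteratedDeriv n σ 0 := by
    intro s hs
    have hmem : ∀ i, s i = -1 ∨ s i = 1 := by
      intro i
      have := Fintype.mem_piFinset.mp hs i
      simpa using this
    rw [iteratedFDeriv_const_smul_apply (hcd s).contDiffAt]
    rw [(L s).iteratedFDeriv_comp_right (hσ.of_le (by exact_mod_cast le_top)) 0 le_rfl]
    simp only [ContinuousMultilinearMap.smul_apply,
      ContinuousMultilinearMap.compContinuousLinearMap_apply]
    have hLsingle : ∀ k, L s (Pi.single k (1 : ℝ)) = s k := by
      intro k
      rw [hLapp]
      simp [Pi.single_apply, mul_comm]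
    have h1 : (fun k => L s (Pi.single k (1 : ℝ))) = fun k => s k • (1 : ℝ) := by
      funext k; simp [hLsingle k]
    rw [h1, (iteratedFDeriv ℝ n σ ((L s) 0)).map_smul_univ]
    have h0 : L s 0 = 0 := by simp
    rw [h0]
    have hsq : (∏ i, s i) * (∏ i, s i) = 1 := by
      rw [← Finset.prod_mul_distrib]
      apply Finset.prod_eq_one
      intro i _
      rcases hmem i with h | h <;> rw [h] <;> norm_num
    have hid : iteratedFDeriv ℝ n σ 0 (fun _ => (1:ℝ)) = iteratedDeriv n σ 0 := by
      rw [iteratedDeriv_eq_iteratedFDeriv]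
    simp only [smul_eq_mul]
    rw [hid]
    rw [← mul_assoc, hsq, one_mul]
  rw [Finset.sum_congr rfl hterm2, Finset.sum_const]
  have hcard : S.card = 2 ^ n := by
    simp [hS, Fintype.card_piFinset, Finset.card_pair (show (-1:ℝ) ≠ 1 by norm_num)]
  rw [hcard]
  simp [mul_comm]
end
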